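/- In the general noisy-response setting, for any σ, σ̃ > 0, any θ ∈ ℝ^d, and any measurable set A ⊆ E × {0,1}, |D_σ(θ)(A) − D_{σ̃}(θ)(A)| ≤ (1/2)·√(|σ² − σ̃²|·d / min(σ², σ̃²)). -/

import Mathlib

/-!
For noise levels `σ` and `τ`, both noisy distributions are images of `DB ⊗ N(0, ·)` under one
and the same map, so it suffices to compare the Gaussian product measures `N(0, σ²)^d` and `N(0, τ²)^d` on measurable
sets. Le Cam's inequality bounds that difference by `√(1 - B²)`, where `B = ∫ √(p q)` is the
Hellinger affinity of the densities. The affinity is multiplicative over products, and for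
one coordinate `√(p_σ p_τ)` is a multiple of a Gaussian density, so `B² = r ^ d` with
`r = 2στ / (σ² + τ²)`. Finally Bernoulli's inequality gives
`1 - r ^ d ≤ d (1 - r) = d (σ - τ)² / (σ² + τ²) ≤ d |σ² - τ²| / (4 min(σ², τ²))`.
-/

open MeasureTheory ProbabilityTheory Real
open scoped ENNReal NNReal

/-- The general noisy-response distribution map: the pushforward of the base distribution
tensored with Gaussian perception noise N(0, σ²I_d) under ((x,y),ξ) ↦ (ρ(x, θ+ξ), y). -/
noncomputable def noisyMapGen {E : Type*} [MeasurableSpace E] {d : ℕ}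
    (DB : Measure (E × Bool)) (ρ : E → (Fin d → ℝ) → E) (σ : ℝ) (θ : Fin d → ℝ) :
    Measure (E × Bool) :=
  Measure.map (fun q : (E × Bool) × (Fin d → ℝ) => (ρ q.1.1 (θ + q.2), q.1.2))
    (DB.prod (Measure.pi fun _ : Fin d => gaussianReal 0 ⟨σ ^ 2, sq_nonneg σ⟩))

section LeCam

variable {α : Type*} [MeasurableSpace α] {μ : Measure α} {p q : α → ℝ}

lemma setIntegral_sub_le_half_integral_abs_sub (hp : Integrable p μ) (hq : Integrable q μ)
    (hpq : ∫ x, p x ∂μ = ∫ x, q x ∂μ) (T : Set α) :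
    ∫ x in T, p x ∂μ - ∫ x in T, q x ∂μ ≤ (∫ x, |p x - q x| ∂μ) / 2 := by
  have hpos : Integrable (fun x => max (p x - q x) 0) μ := (hp.sub hq).pos_part
  have habs : ∀ x, |p x - q x| = 2 * max (p x - q x) 0 - (p x - q x) := fun x => by
    rcases le_total (p x - q x) 0 with h | h
    · rw [abs_of_nonpos h, max_eq_right h]; ring
    · rw [abs_of_nonneg h, max_eq_left h]; ring
  calc ∫ x in T, p x ∂μ - ∫ x in T, q x ∂μ = ∫ x in T, (p x - q x) ∂μ :=
        (integral_sub hp.integrableOn hq.integrableOn).symm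
    _ ≤ ∫ x in T, max (p x - q x) 0 ∂μ :=
        integral_mono (hp.sub hq).integrableOn hpos.integrableOn fun x => le_max_left _ _
    _ ≤ ∫ x, max (p x - q x) 0 ∂μ :=
        setIntegral_le_integral hpos (ae_of_all _ fun x => le_max_right _ _)
    _ = (∫ x, |p x - q x| ∂μ) / 2 := by
        simp_rw [habs]
        rw [integral_sub (f := fun x => 2 * max (p x - q x) 0) (g := fun x => p x - q x)
            (hpos.const_mul 2) (hp.sub hq), integral_const_mul, integral_sub hp hq, hpq]
        ring

lemma integrable_sqrt_mul (hp : Integrable p μ) (hq : Integrable q μ) (hp0 : 0 ≤ p) (hq0 : 0 ≤ q) :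
    Integrable (fun x => √(p x * q x)) μ := by
  refine ((hp.add hq).div_const 2).mono' ?_ (ae_of_all _ fun x => ?_)
  · exact Real.continuous_sqrt.comp_aestronglyMeasurable
      (hp.aestronglyMeasurable.mul hq.aestronglyMeasurable)
  · rw [Real.norm_of_nonneg (Real.sqrt_nonneg _), Real.sqrt_mul (hp0 x), Pi.add_apply]
    nlinarith [sq_nonneg (√(p x) - √(q x)), Real.sq_sqrt (hp0 x), Real.sq_sqrt (hq0 x)]

lemma integral_mul_le_sqrt_mul_sqrt {f g : α → ℝ} (hf0 : 0 ≤ f) (hg0 : 0 ≤ g)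
    (hf : AEStronglyMeasurable f μ) (hg : AEStronglyMeasurable g μ)
    (hf2 : Integrable (fun x => f x ^ 2) μ) (hg2 : Integrable (fun x => g x ^ 2) μ) :
    ∫ x, f x * g x ∂μ ≤ √(∫ x, f x ^ 2 ∂μ) * √(∫ x, g x ^ 2 ∂μ) := by
  have h := integral_mul_le_Lp_mul_Lq_of_nonneg Real.HolderConjugate.two_two
    (ae_of_all μ hf0) (ae_of_all μ hg0)
    (by rw [ENNReal.ofReal_ofNat]; exact (memLp_two_iff_integrable_sq hf).mpr hf2)
    (by rw [ENNReal.ofReal_ofNat]; exact (memLp_two_iff_integrable_sq hg).mpr hg2)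
  rw [Real.sqrt_eq_rpow, Real.sqrt_eq_rpow]
  simpa only [Real.rpow_two] using h

lemma integral_abs_sub_le_two_mul_sqrt_one_sub_sq (hp : Integrable p μ) (hq : Integrable q μ)
    (hp0 : 0 ≤ p) (hq0 : 0 ≤ q) (hp1 : ∫ x, p x ∂μ = 1) (hq1 : ∫ x, q x ∂μ = 1) :
    ∫ x, |p x - q x| ∂μ ≤ 2 * √(1 - (∫ x, √(p x * q x) ∂μ) ^ 2) := by
  set B := ∫ x, √(p x * q x) ∂μ
  have hpq := integrable_sqrt_mul hp hq hp0 hq0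
  have hsq : ∀ x, √(p x) ^ 2 = p x := fun x => Real.sq_sqrt (hp0 x)
  have hsq' : ∀ x, √(q x) ^ 2 = q x := fun x => Real.sq_sqrt (hq0 x)
  have hmul : ∀ x, √(p x * q x) = √(p x) * √(q x) := fun x => Real.sqrt_mul (hp0 x) _
  have hdiff : ∀ x, |√(p x) - √(q x)| ^ 2 = p x + q x - 2 * √(p x * q x) := fun x => by
    rw [sq_abs, hmul]; nlinarith [hsq x, hsq' x]
  have hsum : ∀ x, (√(p x) + √(q x)) ^ 2 = p x + q x + 2 * √(p x * q x) := fun x => by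
    rw [hmul]; nlinarith [hsq x, hsq' x]
  -- Cauchy–Schwarz on `|p - q| = |√p - √q| (√p + √q)`, with `∫ (√p ± √q)² = 2 ± 2B`.
  have hcs := integral_mul_le_sqrt_mul_sqrt (f := fun x => |√(p x) - √(q x)|)
    (g := fun x => √(p x) + √(q x)) (fun x => abs_nonneg _)
    (fun x => add_nonneg (Real.sqrt_nonneg (p x)) (Real.sqrt_nonneg (q x)))
    (by fun_prop) (by fun_prop)
    (by simp_rw [hdiff]; exact (hp.add hq).sub (hpq.const_mul 2))
    (by simp_rw [hsum]; exact (hp.add hq).add (hpq.const_mul 2))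
  have hfac : ∀ x, |p x - q x| = |√(p x) - √(q x)| * (√(p x) + √(q x)) := fun x => by
    rw [← abs_of_nonneg (add_nonneg (Real.sqrt_nonneg (p x)) (Real.sqrt_nonneg (q x))),
      ← abs_mul]
    congr 1; nlinarith [hsq x, hsq' x]
  simp_rw [hfac]
  refine hcs.trans_eq ?_
  have hpq1 : Integrable (fun x => p x + q x) μ := hp.add hq
  have hB0 : 0 ≤ B := integral_nonneg fun x => Real.sqrt_nonneg _
  simp_rw [hdiff, hsum]
  rw [integral_sub hpq1 (hpq.const_mul 2), integral_add hpq1 (hpq.const_mul 2),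
    integral_add hp hq, integral_const_mul, hp1, hq1, ← Real.sqrt_mul' _ (by linarith),
    show (1 + 1 - 2 * B) * (1 + 1 + 2 * B) = 2 ^ 2 * (1 - B ^ 2) by ring,
    Real.sqrt_mul (by positivity), Real.sqrt_sq zero_le_two]

theorem withDensity_ofReal_apply_le_add_sqrt_one_sub_sq (hp : Integrable p μ) (hq : Integrable q μ)
    (hp0 : 0 ≤ p) (hq0 : 0 ≤ q) (hp1 : ∫ x, p x ∂μ = 1) (hq1 : ∫ x, q x ∂μ = 1)
    {T : Set α} (hT : MeasurableSet T) :
    μ.withDensity (fun x => ENNReal.ofReal (p x)) T ≤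
      μ.withDensity (fun x => ENNReal.ofReal (q x)) T +
        ENNReal.ofReal √(1 - (∫ x, √(p x * q x) ∂μ) ^ 2) := by
  rw [withDensity_apply _ hT, withDensity_apply _ hT,
    ← ofReal_integral_eq_lintegral_ofReal hp.restrict (ae_of_all _ hp0),
    ← ofReal_integral_eq_lintegral_ofReal hq.restrict (ae_of_all _ hq0),
    ← ENNReal.ofReal_add (setIntegral_nonneg hT fun x _ => hq0 x) (Real.sqrt_nonneg _)]
  refine ENNReal.ofReal_le_ofReal ?_
  have h1 := setIntegral_sub_le_half_integral_abs_sub hp hq (hp1.trans hq1.symm) T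
  have h2 := integral_abs_sub_le_two_mul_sqrt_one_sub_sq hp hq hp0 hq0 hp1 hq1
  linarith

end LeCam

theorem MeasureTheory.Measure.pi_eq_withDensity_prod {ι : Type*} [Fintype ι] {α : ι → Type*}
    [∀ i, MeasurableSpace (α i)] {μ ν : ∀ i, Measure (α i)} [∀ i, SigmaFinite (μ i)]
    [∀ i, SigmaFinite (ν i)] {f : ∀ i, α i → ℝ} (hf : ∀ i, Integrable (f i) (μ i))
    (hf0 : ∀ i, 0 ≤ f i) (hν : ∀ i, ν i = (μ i).withDensity fun x => ENNReal.ofReal (f i x)) :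
    Measure.pi ν = (Measure.pi μ).withDensity fun x => ENNReal.ofReal (∏ i, f i (x i)) := by
  refine Measure.pi_eq fun s hs => ?_
  rw [withDensity_apply _ (MeasurableSet.univ_pi hs), Measure.restrict_pi_pi,
    ← ofReal_integral_eq_lintegral_ofReal (Integrable.fintype_prod_dep fun i => (hf i).restrict)
      (ae_of_all _ fun x => Finset.prod_nonneg fun i _ => hf0 i _),
    integral_fintype_prod_eq_prod,
    ENNReal.ofReal_prod_of_nonneg fun i _ => integral_nonneg fun x => hf0 i x]
  refine Finset.prod_congr rfl fun i _ => ?_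
  rw [hν, withDensity_apply _ (hs i),
    ofReal_integral_eq_lintegral_ofReal (hf i).restrict (ae_of_all _ (hf0 i))]

lemma MeasureTheory.Measure.prod_apply_le_add {β γ : Type*} [MeasurableSpace β]
    [MeasurableSpace γ] (μ : Measure β) [IsProbabilityMeasure μ] {ν₁ ν₂ : Measure γ}
    [SFinite ν₁] [SFinite ν₂] {ε : ℝ≥0∞} (h : ∀ T, MeasurableSet T → ν₁ T ≤ ν₂ T + ε)
    {S : Set (β × γ)} (hS : MeasurableSet S) :
    μ.prod ν₁ S ≤ μ.prod ν₂ S + ε := by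
  rw [Measure.prod_apply hS, Measure.prod_apply hS]
  calc ∫⁻ x, ν₁ (Prod.mk x ⁻¹' S) ∂μ ≤ ∫⁻ x, (ν₂ (Prod.mk x ⁻¹' S) + ε) ∂μ :=
        lintegral_mono fun x => h _ (measurable_prodMk_left hS)
    _ = ∫⁻ x, ν₂ (Prod.mk x ⁻¹' S) ∂μ + ε := by
        rw [lintegral_add_right _ measurable_const, lintegral_const, measure_univ, mul_one]

lemma sqrt_gaussianPDFReal_mul (m : ℝ) {σ τ : ℝ} (hσ : 0 < σ) (hτ : 0 < τ) {v w : ℝ≥0}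
    (hv : (v : ℝ) = σ ^ 2) (hw : (w : ℝ) = τ ^ 2) (x : ℝ) :
    √(gaussianPDFReal m v x * gaussianPDFReal m w x) =
      √(2 * σ * τ / (σ ^ 2 + τ ^ 2)) * gaussianPDFReal m (2 * v * w / (v + w)) x := by
  refine (Real.sqrt_eq_iff_eq_sq (mul_nonneg (gaussianPDFReal_nonneg _ _ _)
    (gaussianPDFReal_nonneg _ _ _)) (mul_nonneg (Real.sqrt_nonneg _)
    (gaussianPDFReal_nonneg _ _ _))).mpr ?_
  simp only [gaussianPDFReal, NNReal.coe_div, NNReal.coe_mul, NNReal.coe_add, NNReal.coe_ofNat,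
    hv, hw]
  rw [mul_pow, Real.sq_sqrt (by positivity)]
  have h2π : (0 : ℝ) < 2 * π := by positivity
  rw [Real.sqrt_mul' _ (sq_nonneg σ), Real.sqrt_mul' _ (sq_nonneg τ), Real.sqrt_sq hσ.le,
    Real.sqrt_sq hτ.le, mul_pow, inv_pow, Real.sq_sqrt (by positivity), ← Real.exp_nat_mul,
    mul_mul_mul_comm, ← Real.exp_add, ← mul_assoc]
  congr 1
  · have hs := Real.sq_sqrt h2π.le
    field_simp
    rw [hs]
  · congr 1
    push_cast
    field_simp
    ring

lemma integral_sqrt_gaussianPDFReal_mul (m : ℝ) {σ τ : ℝ} (hσ : 0 < σ) (hτ : 0 < τ)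
    {v w : ℝ≥0} (hv : (v : ℝ) = σ ^ 2) (hw : (w : ℝ) = τ ^ 2) :
    ∫ x, √(gaussianPDFReal m v x * gaussianPDFReal m w x) = √(2 * σ * τ / (σ ^ 2 + τ ^ 2)) := by
  have hs : 2 * v * w / (v + w) ≠ 0 := by
    rw [← NNReal.coe_ne_zero]
    push_cast [hv, hw]
    positivity
  simp_rw [sqrt_gaussianPDFReal_mul m hσ hτ hv hw]
  rw [integral_const_mul, integral_gaussianPDFReal_eq_one m hs, mul_one]

lemma pi_gaussianReal_eq_withDensity (ι : Type*) [Fintype ι] (m : ℝ) {v : ℝ≥0} (hv : v ≠ 0) :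
    Measure.pi (fun _ : ι => gaussianReal m v) =
      volume.withDensity fun x => ENNReal.ofReal (∏ i, gaussianPDFReal m v (x i)) :=
  Measure.pi_eq_withDensity_prod (fun _ => integrable_gaussianPDFReal m v)
    (fun _ => gaussianPDFReal_nonneg m v) (fun _ => gaussianReal_of_var_ne_zero m hv)

lemma pi_gaussianReal_apply_le_add (ι : Type*) [Fintype ι] (m : ℝ) {σ τ : ℝ}
    (hσ : 0 < σ) (hτ : 0 < τ) {v w : ℝ≥0} (hv : (v : ℝ) = σ ^ 2) (hw : (w : ℝ) = τ ^ 2)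
    {T : Set (ι → ℝ)} (hT : MeasurableSet T) :
    Measure.pi (fun _ : ι => gaussianReal m v) T ≤
      Measure.pi (fun _ : ι => gaussianReal m w) T +
        ENNReal.ofReal √(1 - (2 * σ * τ / (σ ^ 2 + τ ^ 2)) ^ Fintype.card ι) := by
  have hv0 : v ≠ 0 := by rw [← NNReal.coe_ne_zero, hv]; positivity
  have hw0 : w ≠ 0 := by rw [← NNReal.coe_ne_zero, hw]; positivity
  let P (u : ℝ≥0) (x : ι → ℝ) : ℝ := ∏ i, gaussianPDFReal m u (x i)
  have hP : ∀ u, Integrable (P u) := fun u =>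
    Integrable.fintype_prod fun _ => integrable_gaussianPDFReal m u
  have hP0 : ∀ u, 0 ≤ P u := fun u x => Finset.prod_nonneg fun i _ => gaussianPDFReal_nonneg m u _
  have hP1 : ∀ {u}, u ≠ 0 → ∫ x, P u x = 1 := fun hu => by
    rw [integral_fintype_prod_volume_eq_pow, integral_gaussianPDFReal_eq_one m hu, one_pow]
  have haff : ∫ x, √(P v x * P w x) = √(2 * σ * τ / (σ ^ 2 + τ ^ 2)) ^ Fintype.card ι := by
    simp_rw [P, ← Finset.prod_mul_distrib, Real.sqrt_prod _ fun i _ =>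
      mul_nonneg (gaussianPDFReal_nonneg m _ _) (gaussianPDFReal_nonneg m _ _)]
    rw [integral_fintype_prod_volume_eq_pow fun y =>
      √(gaussianPDFReal m v y * gaussianPDFReal m w y),
      integral_sqrt_gaussianPDFReal_mul m hσ hτ hv hw]
  rw [pi_gaussianReal_eq_withDensity ι m hv0, pi_gaussianReal_eq_withDensity ι m hw0]
  have h := withDensity_ofReal_apply_le_add_sqrt_one_sub_sq (hP v) (hP w) (hP0 v) (hP0 w)
    (hP1 hv0) (hP1 hw0) hT
  rwa [haff, ← pow_mul, pow_mul', Real.sq_sqrt (by positivity)] at h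

lemma sq_sub_div_le_abs_sq_sub_div {σ τ : ℝ} (hσ : 0 < σ) (hτ : 0 < τ) :
    (σ - τ) ^ 2 / (σ ^ 2 + τ ^ 2) ≤ |σ ^ 2 - τ ^ 2| / (4 * min (σ ^ 2) (τ ^ 2)) := by
  wlog h : τ ≤ σ generalizing σ τ
  · have := this hτ hσ (by linarith)
    rwa [abs_sub_comm, min_comm, add_comm, ← neg_sub, neg_sq] at this
  rw [abs_of_nonneg (by nlinarith), min_eq_right (by nlinarith),
    div_le_div_iff₀ (by positivity) (by positivity)]
  have hd : 0 ≤ σ - τ := by linarith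
  nlinarith [mul_nonneg hd (mul_nonneg hd (mul_nonneg hd hd)),
    mul_nonneg hd (mul_nonneg hd (mul_nonneg hd hτ.le)),
    mul_nonneg hd (mul_nonneg hd (mul_nonneg hτ.le hτ.le)),
    mul_nonneg hd (mul_nonneg hτ.le (mul_nonneg hτ.le hτ.le))]

lemma sqrt_one_sub_pow_le {σ τ : ℝ} (hσ : 0 < σ) (hτ : 0 < τ) (n : ℕ) :
    √(1 - (2 * σ * τ / (σ ^ 2 + τ ^ 2)) ^ n) ≤
      1 / 2 * √(|σ ^ 2 - τ ^ 2| * n / min (σ ^ 2) (τ ^ 2)) := by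
  set r := 2 * σ * τ / (σ ^ 2 + τ ^ 2)
  have hr : 1 - r = (σ - τ) ^ 2 / (σ ^ 2 + τ ^ 2) := by
    simp only [r]; field_simp; ring
  have hr0 : 0 ≤ r := by positivity
  have hbern : 1 - r ^ n ≤ n * (1 - r) := by
    have := one_add_mul_le_pow (a := r - 1) (by linarith) n
    simp only [add_sub_cancel] at this
    linarith
  calc √(1 - r ^ n) ≤ √((|σ ^ 2 - τ ^ 2| * n / min (σ ^ 2) (τ ^ 2)) / 2 ^ 2) := by
        refine Real.sqrt_le_sqrt (hbern.trans ?_)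
        rw [hr]
        calc (n : ℝ) * ((σ - τ) ^ 2 / (σ ^ 2 + τ ^ 2))
            ≤ n * (|σ ^ 2 - τ ^ 2| / (4 * min (σ ^ 2) (τ ^ 2))) :=
              mul_le_mul_of_nonneg_left (sq_sub_div_le_abs_sq_sub_div hσ hτ) n.cast_nonneg
          _ = _ := by field_simp; ring
    _ = 1 / 2 * √(|σ ^ 2 - τ ^ 2| * n / min (σ ^ 2) (τ ^ 2)) := by
        rw [Real.sqrt_div' _ (by positivity), Real.sqrt_sq zero_le_two]; ring

-- `⟨σ ^ 2, _⟩` elaborates at type `{r // 0 ≤ r}`, which instance search does not unfold to `ℝ≥0`.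
instance isProbabilityMeasure_gaussianReal_sq (m σ : ℝ) :
    IsProbabilityMeasure (gaussianReal m ⟨σ ^ 2, sq_nonneg σ⟩) :=
  instIsProbabilityMeasureGaussianReal _ _

instance isFiniteMeasure_noisyMapGen {E : Type*} [MeasurableSpace E] {d : ℕ}
    (DB : Measure (E × Bool)) [IsFiniteMeasure DB] (ρ : E → (Fin d → ℝ) → E) (σ : ℝ)
    (θ : Fin d → ℝ) : IsFiniteMeasure (noisyMapGen DB ρ σ θ) := by
  unfold noisyMapGen
  infer_instance

lemma noisyMapGen_apply_le_add {E : Type*} [MeasurableSpace E] {d : ℕ}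
    (DB : Measure (E × Bool)) [IsProbabilityMeasure DB] (ρ : E → (Fin d → ℝ) → E)
    (hρ : Measurable fun q : E × (Fin d → ℝ) => ρ q.1 q.2) {σ τ : ℝ} (hσ : 0 < σ) (hτ : 0 < τ)
    (θ : Fin d → ℝ) {A : Set (E × Bool)} (hA : MeasurableSet A) :
    noisyMapGen DB ρ σ θ A ≤
      noisyMapGen DB ρ τ θ A + ENNReal.ofReal √(1 - (2 * σ * τ / (σ ^ 2 + τ ^ 2)) ^ d) := by
  have hF : Measurable fun q : (E × Bool) × (Fin d → ℝ) => (ρ q.1.1 (θ + q.2), q.1.2) :=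
    (hρ.comp (measurable_fst.fst.prodMk (measurable_const.add measurable_snd))).prodMk
      measurable_fst.snd
  rw [noisyMapGen, noisyMapGen, Measure.map_apply hF hA, Measure.map_apply hF hA]
  refine Measure.prod_apply_le_add DB (fun T hT => ?_) (hF hA)
  simpa only [Fintype.card_fin] using pi_gaussianReal_apply_le_add (Fin d) 0 hσ hτ rfl rfl hT

lemma toReal_noisyMapGen_apply_le_add {E : Type*} [MeasurableSpace E] {d : ℕ}
    (DB : Measure (E × Bool)) [IsProbabilityMeasure DB] (ρ : E → (Fin d → ℝ) → E)
    (hρ : Measurable fun q : E × (Fin d → ℝ) => ρ q.1 q.2) {σ τ : ℝ} (hσ : 0 < σ) (hτ : 0 < τ)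
    (θ : Fin d → ℝ) {A : Set (E × Bool)} (hA : MeasurableSet A) :
    (noisyMapGen DB ρ σ θ A).toReal ≤ (noisyMapGen DB ρ τ θ A).toReal +
      1 / 2 * √(|σ ^ 2 - τ ^ 2| * d / min (σ ^ 2) (τ ^ 2)) := by
  have h := ENNReal.toReal_mono (by finiteness) (noisyMapGen_apply_le_add DB ρ hρ hσ hτ θ hA)
  rw [ENNReal.toReal_add (by finiteness) ENNReal.ofReal_ne_top,
    ENNReal.toReal_ofReal (Real.sqrt_nonneg _)] at h
  linarith [sqrt_one_sub_pow_le hσ hτ d]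

/-- Lemma 2 (robustness of the noisy-response distribution to an error in
the noise parameter, in total variation distance). -/
theorem stmt14 {E : Type*} [MeasurableSpace E] {d : ℕ}
    (DB : Measure (E × Bool)) [IsProbabilityMeasure DB]
    (ρ : E → (Fin d → ℝ) → E)
    (hρ : Measurable fun q : E × (Fin d → ℝ) => ρ q.1 q.2)
    (σ σt : ℝ) (hσ : 0 < σ) (hσt : 0 < σt) (θ : Fin d → ℝ)
    (A : Set (E × Bool)) (hA : MeasurableSet A) :
    |(noisyMapGen DB ρ σ θ A).toReal - (noisyMapGen DB ρ σt θ A).toReal| ≤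
      (1 / 2) * Real.sqrt (|σ ^ 2 - σt ^ 2| * d / min (σ ^ 2) (σt ^ 2)) := by
  rw [abs_sub_le_iff]
  constructor
  · linarith [toReal_noisyMapGen_apply_le_add DB ρ hρ hσ hσt θ hA]
  · rw [abs_sub_comm, min_comm]
    linarith [toReal_noisyMapGen_apply_le_add DB ρ hρ hσt hσ θ hA]
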